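/- arXiv:2007.00379 — 5 statements merged into one kernel-verified Lean document; each statement's English description precedes it below -/
import Mathlib

section
/- Let n ≥ 1 be an integer and let 0 < λ ≤ n. Let a_1, …, a_n be i.i.d. Bernoulli random variables with P(a_j = 1) = λ/n and P(a_j = 0) = 1 − λ/n, and let W_1, …, W_n be i.i.d. real random variables, independent of (a_1, …, a_n), with E|W_j|^i < ∞ and E W_j^i = V_i ≥ 0 for every i ≥ 1. Then for every integer k with 1 ≤ k ≤ n, (1 − k²/(2n)) · M_k(λ) ≤ E[(Σ_{j=1}^n a_j W_j)^k] ≤ M_k(λ); in particular E[(Σ_{j=1}^n a_j W_j)^k] = M_k(λ)·(1 + O(k²/n)) uniformly in λ. -/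
open scoped BigOperators ENNReal
open Filter MeasureTheory

noncomputable section

/-- The finset of tuples `(l 0, ..., l (k-1))` (representing `l_1, ..., l_k`) of nonnegative
integers with `l_1 + 2 l_2 + ⋯ + k l_k = k`. -/
def bellTuples (k : ℕ) : Finset (Fin k → ℕ) :=
  (Fintype.piFinset fun _ => Finset.range (k + 1)).filter
    (fun l => ∑ i, (i.1 + 1) * l i = k)

/-- Weighted Bell polynomial `M_k(x)` for weights `V_1, V_2, …`. -/
def weightedBell (V : ℕ → ℝ) (k : ℕ) (x : ℝ) : ℝ :=
  (Nat.factorial k : ℝ) * ∑ l ∈ bellTuples k, ∏ i : Fin k,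
    (x * V (i.1 + 1)) ^ (l i) /
      ((Nat.factorial (i.1 + 1) : ℝ) ^ (l i) * (Nat.factorial (l i) : ℝ))

/-- Exponential generating function `H(u) = 1 + ∑_{i ≥ 1} V_i u^i / i!` of the weights. -/
def weightEGF (V : ℕ → ℝ) (u : ℝ) : ℝ :=
  1 + ∑' i : ℕ, V (i + 1) * u ^ (i + 1) / (Nat.factorial (i + 1) : ℝ)

/-- Termwise derivative `H'(u) = ∑_{i ≥ 1} V_i u^{i-1}/(i-1)!`. -/
def weightEGFDeriv (V : ℕ → ℝ) (u : ℝ) : ℝ :=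
  ∑' i : ℕ, V (i + 1) * u ^ i / (Nat.factorial i : ℝ)

/-- Termwise second derivative `H''(u)`. -/
def weightEGFDeriv2 (V : ℕ → ℝ) (u : ℝ) : ℝ :=
  ∑' i : ℕ, V (i + 2) * u ^ i / (Nat.factorial i : ℝ)

/-- `H(u) < ∞` for all `u ∈ [0, u_0)`. -/
def HFinite (V : ℕ → ℝ) (u0 : ℝ≥0∞) : Prop :=
  ∀ u : ℝ, 0 ≤ u → ENNReal.ofReal u < u0 →
    Summable (fun i : ℕ => V (i + 1) * u ^ (i + 1) / (Nat.factorial (i + 1) : ℝ))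

/-!
By the multinomial theorem and independence, `E[(∑ a_j W_j)^k] = ∑_c multinomial(c) ∏_j g(c_j)`
over `c : Fin n → ℕ` with `∑ c_j = k`, where `g 0 = 1` and `g i = (λ/n) V_i`. This is `k!` times
the coefficient of `t^k` in `(1 + ∑_i g(i) t^i / i!)^n`. Expanding the same power binomially and
then multinomially instead groups the `c` by their type `l` (`l_i = #{j | c_j = i}`) without any
counting, and gives `E = k! ∑_l ((n)_m / n^m) T_l(λ)` with `m = ∑ l_i`, whereas
`M_k(λ) = k! ∑_l T_l(λ)` with all `T_l(λ) ≥ 0`. Both bounds follow termwise from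
`1 - m(m-1)/(2n) ≤ (n)_m / n^m ≤ 1`.
-/

open Finset

def bellTerm (w : ℕ → ℝ) {k : ℕ} (l : Fin k → ℕ) : ℝ :=
  ∏ i : Fin k,
    w (i.1 + 1) ^ l i / ((Nat.factorial (i.1 + 1) : ℝ) ^ l i * (Nat.factorial (l i) : ℝ))

lemma weightedBell_eq_sum_bellTerm (V : ℕ → ℝ) (k : ℕ) (x : ℝ) :
    weightedBell V k x = k.factorial * ∑ l ∈ bellTuples k, bellTerm (fun i => x * V i) l :=
  rfl

lemma bellTerm_const_mul (c : ℝ) (w : ℕ → ℝ) {k : ℕ} (l : Fin k → ℕ) :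
    bellTerm (fun i => c * w i) l = c ^ (∑ i, l i) * bellTerm w l := by
  simp only [bellTerm, mul_pow, ← prod_pow_eq_pow_sum, ← prod_mul_distrib, mul_div_assoc]

lemma bellTerm_nonneg {w : ℕ → ℝ} (hw : ∀ i, 0 ≤ w (i + 1)) {k : ℕ} (l : Fin k → ℕ) :
    0 ≤ bellTerm w l :=
  prod_nonneg fun i _ => by have := hw i; positivity

lemma le_of_sum_succ_mul_eq {k : ℕ} {l : Fin k → ℕ} (hl : ∑ i, (i.1 + 1) * l i = k) :
    (∀ i, l i ≤ k) ∧ ∑ i, l i ≤ k := by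
  have hle : ∀ i, l i ≤ (i.1 + 1) * l i := fun i => Nat.le_mul_of_pos_left _ i.1.succ_pos
  refine ⟨fun i => ?_, (sum_le_sum fun i _ => hle i).trans hl.le⟩
  exact (hle i).trans <| (single_le_sum (f := fun j : Fin k => (j.1 + 1) * l j)
    (fun j _ => Nat.zero_le _) (mem_univ i)).trans hl.le

lemma mem_bellTuples {k : ℕ} {l : Fin k → ℕ} :
    l ∈ bellTuples k ↔ ∑ i, (i.1 + 1) * l i = k := by
  simp only [bellTuples, mem_filter, Fintype.mem_piFinset, mem_range, and_iff_right_iff_imp]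
  exact fun hl i => Nat.lt_succ_of_le ((le_of_sum_succ_mul_eq hl).1 i)

lemma choose_mul_multinomial_mul_prod_factorial (n : ℕ) {ι : Type*} (s : Finset ι) (l : ι → ℕ) :
    n.choose (∑ i ∈ s, l i) * Nat.multinomial s l * ∏ i ∈ s, (l i).factorial =
      n.descFactorial (∑ i ∈ s, l i) := by
  rw [Nat.descFactorial_eq_factorial_mul_choose, ← Nat.multinomial_spec s l]
  ring

section Polynomial

open Polynomial

variable {R : Type*} [CommSemiring R]

lemma coeff_sum_C_mul_X_pow {ι : Type*} (s : Finset ι) (a : ι → R) (d : ι → ℕ) (k : ℕ) :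
    (∑ i ∈ s, C (a i) * X ^ d i).coeff k = ∑ i ∈ s with d i = k, a i := by
  simp [finsetSum_coeff, sum_filter, eq_comm]

lemma coeff_pow_sum_C_mul_X_pow (f : ℕ → R) (n k : ℕ) :
    ((∑ v ∈ range (k + 1), C (f v) * X ^ v) ^ n).coeff k =
      ∑ c ∈ piAntidiag (univ : Finset (Fin n)) k, ∏ j, f (c j) := by
  have hprod : ∀ c : Fin n → ℕ, ∏ j, C (f (c j)) * X ^ c j = C (∏ j, f (c j)) * X ^ ∑ j, c j := by
    intro c
    rw [prod_mul_distrib, map_prod, prod_pow_eq_pow_sum]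
  rw [sum_pow', sum_congr rfl fun c _ => hprod c, coeff_sum_C_mul_X_pow]
  congr 1
  ext c
  simp only [mem_filter, Fintype.mem_piFinset, mem_range, mem_piAntidiag, mem_univ, implies_true,
    and_true, and_iff_right_iff_imp]
  rintro rfl j
  exact Nat.lt_succ_of_le (single_le_sum (fun i _ => Nat.zero_le _) (mem_univ j))

lemma coeff_one_add_pow {k n : ℕ} (hkn : k ≤ n) (b : Fin k → R) :
    ((1 + ∑ i : Fin k, C (b i) * X ^ (i.1 + 1)) ^ n).coeff k =
      ∑ l ∈ bellTuples k,
        ((n.choose (∑ i, l i) * Nat.multinomial univ l : ℕ) : R) * ∏ i, b i ^ l i := by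
  have hterm : ∀ m, ∀ l ∈ piAntidiag (univ : Finset (Fin k)) m,
      (Nat.multinomial univ l : R[X]) * (∏ i, (C (b i) * X ^ (i.1 + 1)) ^ l i) *
          (1 : R[X]) ^ (n - m) * (n.choose m : R[X]) =
        C (((n.choose (∑ i, l i) * Nat.multinomial univ l : ℕ) : R) * ∏ i, b i ^ l i) *
          X ^ ∑ i, (i.1 + 1) * l i := by
    intro m l hl
    rw [(mem_piAntidiag.mp hl).1.symm]
    simp only [mul_pow, prod_mul_distrib, ← pow_mul, prod_pow_eq_pow_sum, map_mul, map_prod,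
      map_pow, map_natCast, one_pow, mul_one, Nat.cast_mul, mul_comm _ (l _)]
    ring
  rw [add_comm, add_pow]
  simp only [sum_pow_eq_sum_piAntidiag, sum_mul]
  rw [finsetSum_coeff]
  simp only [fun m => sum_congr rfl (hterm m), coeff_sum_C_mul_X_pow]
  rw [← sum_fiberwise_of_maps_to (g := fun l : Fin k → ℕ => ∑ i, l i) (t := range (n + 1))]
  · refine sum_congr rfl fun m _ => ?_
    congr 1
    ext l
    simp only [mem_filter, mem_piAntidiag, mem_univ, implies_true, and_true, mem_bellTuples]
    tauto
  · intro l hl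
    exact mem_range.mpr <|
      Nat.lt_succ_of_le ((le_of_sum_succ_mul_eq (mem_bellTuples.mp hl)).2.trans hkn)

end Polynomial

open Polynomial in
theorem sum_multinomial_mul_prod_eq_sum_bellTerm (w : ℕ → ℝ) {n k : ℕ} (hkn : k ≤ n) :
    ∑ c ∈ piAntidiag (univ : Finset (Fin n)) k,
        (Nat.multinomial univ c : ℝ) * ∏ j, (if c j = 0 then 1 else w (c j)) =
      k.factorial * ∑ l ∈ bellTuples k, (n.descFactorial (∑ i, l i) : ℝ) * bellTerm w l := by
  set g : ℕ → ℝ := fun v => (if v = 0 then 1 else w v) / v.factorial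
  have hmultinomial : ∀ c ∈ piAntidiag (univ : Finset (Fin n)) k,
      (Nat.multinomial univ c : ℝ) * ∏ j, (if c j = 0 then 1 else w (c j)) =
        k.factorial * ∏ j, g (c j) := by
    intro c hc
    have hspec := Nat.multinomial_spec univ c
    rw [(mem_piAntidiag.mp hc).1] at hspec
    simp only [g, prod_div_distrib, ← hspec, Nat.cast_mul, Nat.cast_prod]
    field_simp
  have hpoly : ∑ v ∈ range (k + 1), C (g v) * X ^ v =
      1 + ∑ i : Fin k, C (w (i.1 + 1) / (i.1 + 1).factorial) * X ^ (i.1 + 1) := by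
    rw [sum_range_succ', Fin.sum_univ_eq_sum_range (fun i => C (w (i + 1) / (i + 1).factorial) *
      X ^ (i + 1)), add_comm]
    simp [g]
  have hterm : ∀ l : Fin k → ℕ,
      ((n.choose (∑ i, l i) * Nat.multinomial univ l : ℕ) : ℝ) *
          ∏ i, (w (i.1 + 1) / (i.1 + 1).factorial) ^ l i =
        n.descFactorial (∑ i, l i) * bellTerm w l := by
    intro l
    rw [← choose_mul_multinomial_mul_prod_factorial, bellTerm]
    simp only [Nat.cast_mul, Nat.cast_prod, div_pow, prod_div_distrib, prod_mul_distrib]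
    field_simp
  rw [sum_congr rfl hmultinomial, ← mul_sum, ← coeff_pow_sum_C_mul_X_pow, hpoly,
    coeff_one_add_pow hkn]
  simp only [hterm]

lemma pow_mul_sub_le_descFactorial {n m : ℕ} (hm : m ≤ n) :
    (n : ℝ) ^ m * (2 * n - ((m : ℝ) ^ 2 - m)) ≤ 2 * n * n.descFactorial m := by
  induction m with
  | zero => simp
  | succ m ih =>
    have hmn : (m : ℝ) + 1 ≤ n := by exact_mod_cast hm
    have hstep : (n.descFactorial (m + 1) : ℝ) = (n - m) * n.descFactorial m := by
      rw [Nat.descFactorial_succ, Nat.cast_mul, Nat.cast_sub (by omega)]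
    have hcube : (m : ℝ) ^ 2 ≤ (m : ℝ) ^ 3 := by
      rcases m.eq_zero_or_pos with rfl | hpos
      · simp
      · exact pow_le_pow_right₀ (by exact_mod_cast hpos) (by norm_num)
    have := mul_le_mul_of_nonneg_left (ih (by omega)) (by linarith : (0 : ℝ) ≤ n - m)
    have hrest := mul_nonneg (pow_nonneg (Nat.cast_nonneg n : (0 : ℝ) ≤ n) m) (sub_nonneg.mpr hcube)
    -- `(n - m) (2n - m² + m) = n (2n - (m + 1)² + (m + 1)) + (m³ - m²)`
    rw [hstep, pow_succ]
    push_cast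
    linear_combination this + hrest

lemma one_sub_sq_div_le_descFactorial_div_pow {n m k : ℕ} (hn : 0 < n) (hmk : m ≤ k)
    (hkn : k ≤ n) :
    1 - (k : ℝ) ^ 2 / (2 * n) ≤ n.descFactorial m / (n : ℝ) ^ m := by
  have hn' : (0 : ℝ) < n := by exact_mod_cast hn
  have hmk' : (m : ℝ) ≤ k := by exact_mod_cast hmk
  rw [le_div_iff₀ (by positivity), ← mul_le_mul_iff_of_pos_left (by positivity : (0 : ℝ) < 2 * n)]
  calc 2 * n * ((1 - (k : ℝ) ^ 2 / (2 * n)) * n ^ m) = n ^ m * (2 * n - k ^ 2) := by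
        field_simp
    _ ≤ n ^ m * (2 * n - ((m : ℝ) ^ 2 - m)) := by
        gcongr
        nlinarith [(Nat.cast_nonneg m : (0 : ℝ) ≤ m)]
    _ ≤ 2 * n * n.descFactorial m := pow_mul_sub_le_descFactorial (hmk.trans hkn)

lemma descFactorial_div_pow_le_one (n m : ℕ) : (n.descFactorial m : ℝ) / (n : ℝ) ^ m ≤ 1 :=
  div_le_one_of_le₀ (by exact_mod_cast n.descFactorial_le_pow m) (by positivity)

open ProbabilityTheory

lemma prod_mul_pow_eq_prod_sumElim {Ω ι : Type*} [Fintype ι] (a W : ι → Ω → ℝ) (c : ι → ℕ)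
    (ω : Ω) :
    ∏ j, (a j ω * W j ω) ^ c j = ∏ t, Sum.elim a W t ω ^ Sum.elim c c t := by
  simp [Fintype.prod_sum_type, mul_pow, prod_mul_distrib]

section Moments

variable {Ω ι : Type*} [MeasurableSpace Ω] {μ : Measure Ω}

lemma ProbabilityTheory.iIndepFun.integrable_finsetProd {X : ι → Ω → ℝ} (hX : iIndepFun X μ)
    (hmeas : ∀ i, Measurable (X i)) (hint : ∀ i, Integrable (X i) μ) (s : Finset ι) :
    Integrable (∏ i ∈ s, X i) μ := by
  classical
  have := hX.isProbabilityMeasure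
  induction s using Finset.induction_on with
  | empty =>
    rw [prod_empty]
    exact integrable_const (1 : ℝ)
  | insert i s hi ih =>
    rw [prod_insert hi]
    exact (hX.indepFun_finsetProd_of_notMem hmeas hi).symm.integrable_mul (hint i) ih

lemma integral_sum_pow_eq_sum_piAntidiag [Fintype ι] [DecidableEq ι] (Z : ι → Ω → ℝ)
    (hZ : ∀ c : ι → ℕ, Integrable (fun ω => ∏ j, Z j ω ^ c j) μ) (k : ℕ) :
    ∫ ω, (∑ j, Z j ω) ^ k ∂μ =
      ∑ c ∈ piAntidiag univ k, (Nat.multinomial univ c : ℝ) * ∫ ω, ∏ j, Z j ω ^ c j ∂μ := by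
  simp_rw [sum_pow_eq_sum_piAntidiag]
  rw [integral_finsetSum _ fun c _ => (hZ c).const_mul _]
  simp_rw [integral_const_mul]

lemma integral_pow_eq_measureReal_of_zero_or_one {a : Ω → ℝ} (ha : Measurable a)
    (h01 : ∀ ω, a ω = 0 ∨ a ω = 1) {c : ℕ} (hc : c ≠ 0) :
    ∫ ω, a ω ^ c ∂μ = μ.real {ω | a ω = 1} := by
  have hindicator : (fun ω => a ω ^ c) = {ω | a ω = 1}.indicator 1 := by
    ext ω
    rcases h01 ω with h | h <;> simp [Set.indicator, h, hc]
  rw [hindicator]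
  exact integral_indicator_one (ha (measurableSet_singleton 1))

variable [Fintype ι] {a W : ι → Ω → ℝ}

lemma integral_prod_mul_pow (hindep : iIndepFun (Sum.elim a W) μ)
    (hmeas : ∀ t, Measurable (Sum.elim a W t)) (c : ι → ℕ) :
    ∫ ω, ∏ j, (a j ω * W j ω) ^ c j ∂μ =
      ∏ j, (∫ ω, a j ω ^ c j ∂μ) * ∫ ω, W j ω ^ c j ∂μ := by
  simp_rw [prod_mul_pow_eq_prod_sumElim]
  rw [hindep.integral_fun_prod_comp (f := fun t x => x ^ Sum.elim c c t)
    (fun t => (hmeas t).aemeasurable) (fun t => (continuous_pow _).aestronglyMeasurable),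
    Fintype.prod_sum_type, prod_mul_distrib]
  rfl

lemma integrable_prod_mul_pow (hindep : iIndepFun (Sum.elim a W) μ)
    (hmeas : ∀ t, Measurable (Sum.elim a W t)) (c : ι → ℕ)
    (hint : ∀ t, Integrable (fun ω => Sum.elim a W t ω ^ Sum.elim c c t) μ) :
    Integrable (fun ω => ∏ j, (a j ω * W j ω) ^ c j) μ := by
  have hY := (hindep.comp (fun t x => x ^ Sum.elim c c t) fun t => measurable_id.pow_const _)
    |>.integrable_finsetProd (fun t => (hmeas t).pow_const _) hint univ
  refine hY.congr (ae_of_all _ fun ω => ?_)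
  simp only [prod_mul_pow_eq_prod_sumElim, Finset.prod_apply]
  rfl

end Moments

theorem integral_sum_mul_pow_eq_sum_bellTerm {Ω : Type*} [MeasurableSpace Ω] {μ : Measure Ω}
    [IsProbabilityMeasure μ] {n : ℕ} {p : ℝ} (hp : 0 ≤ p) {a W : Fin n → Ω → ℝ} {V : ℕ → ℝ}
    (hameas : ∀ j, Measurable (a j)) (hWmeas : ∀ j, Measurable (W j))
    (ha01 : ∀ j ω, a j ω = 0 ∨ a j ω = 1) (haP : ∀ j, μ {ω | a j ω = 1} = ENNReal.ofReal p)
    (hindep : iIndepFun (Sum.elim a W) μ)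
    (hWint : ∀ j, ∀ i : ℕ, 1 ≤ i → Integrable (fun ω => |W j ω| ^ i) μ)
    (hWmom : ∀ j, ∀ i : ℕ, 1 ≤ i → ∫ ω, (W j ω) ^ i ∂μ = V i) {k : ℕ} (hkn : k ≤ n) :
    ∫ ω, (∑ j, a j ω * W j ω) ^ k ∂μ =
      k.factorial * ∑ l ∈ bellTuples k, (n.descFactorial (∑ i, l i) : ℝ) *
        (p ^ (∑ i, l i) * bellTerm V l) := by
  have hmeas : ∀ t, Measurable (Sum.elim a W t) := Sum.forall.2 ⟨hameas, hWmeas⟩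
  have hint : ∀ (c : Fin n → ℕ) t, Integrable (fun ω => Sum.elim a W t ω ^ Sum.elim c c t) μ := by
    rintro c (j | j)
    · refine Integrable.of_bound ((hameas j).pow_const _).aestronglyMeasurable 1
        (ae_of_all _ fun ω => ?_)
      rcases ha01 j ω with h | h <;> simp [h, pow_le_one₀]
    · by_cases hc : c j = 0
      · simp [hc]
      · refine (integrable_norm_iff ((hWmeas j).pow_const _).aestronglyMeasurable).1 ?_
        simpa [abs_pow] using hWint j (c j) (Nat.one_le_iff_ne_zero.2 hc)
  have hmoment : ∀ c : Fin n → ℕ, ∫ ω, ∏ j, (a j ω * W j ω) ^ c j ∂μ =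
      ∏ j, (if c j = 0 then 1 else p * V (c j)) := by
    intro c
    rw [integral_prod_mul_pow hindep hmeas]
    refine prod_congr rfl fun j _ => ?_
    split_ifs with hc
    · simp [hc]
    · rw [integral_pow_eq_measureReal_of_zero_or_one (hameas j) (ha01 j) hc,
        hWmom j _ (Nat.one_le_iff_ne_zero.2 hc), measureReal_def, haP, ENNReal.toReal_ofReal hp]
  rw [integral_sum_pow_eq_sum_piAntidiag _ fun c => integrable_prod_mul_pow hindep hmeas c (hint c)]
  simp only [hmoment]
  rw [sum_multinomial_mul_prod_eq_sum_bellTerm (fun v => p * V v) hkn]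
  simp only [bellTerm_const_mul]

theorem stmt0_general
    {Ω : Type*} [MeasurableSpace Ω] (μ : Measure Ω) [IsProbabilityMeasure μ]
    (n : ℕ) (hn : 1 ≤ n) (lam : ℝ) (hlam : 0 < lam)
    (a W : Fin n → Ω → ℝ) (V : ℕ → ℝ)
    (hVpos : ∀ i : ℕ, 1 ≤ i → 0 ≤ V i)
    (hameas : ∀ j, Measurable (a j)) (hWmeas : ∀ j, Measurable (W j))
    (ha01 : ∀ j ω, a j ω = 0 ∨ a j ω = 1)
    (haP : ∀ j, μ {ω | a j ω = 1} = ENNReal.ofReal (lam / n))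
    (hindep : ProbabilityTheory.iIndepFun
      (Sum.elim a W) μ)
    (hWint : ∀ j, ∀ i : ℕ, 1 ≤ i → Integrable (fun ω => |W j ω| ^ i) μ)
    (hWmom : ∀ j, ∀ i : ℕ, 1 ≤ i → ∫ ω, (W j ω) ^ i ∂μ = V i)
    (k : ℕ) (hkn : k ≤ n) :
    (1 - (k : ℝ) ^ 2 / (2 * n)) * weightedBell V k lam ≤
        ∫ ω, (∑ j, a j ω * W j ω) ^ k ∂μ ∧
      ∫ ω, (∑ j, a j ω * W j ω) ^ k ∂μ ≤ weightedBell V k lam := by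
  have hE := integral_sum_mul_pow_eq_sum_bellTerm (by positivity) hameas hWmeas ha01 haP hindep
    hWint hWmom hkn
  have hM : weightedBell V k lam =
      k.factorial * ∑ l ∈ bellTuples k, lam ^ (∑ i, l i) * bellTerm V l := by
    simp only [weightedBell_eq_sum_bellTerm, bellTerm_const_mul]
  have hratio : ∀ l : Fin k → ℕ, (n.descFactorial (∑ i, l i) : ℝ) * ((lam / n) ^ (∑ i, l i) *
      bellTerm V l) = n.descFactorial (∑ i, l i) / (n : ℝ) ^ (∑ i, l i) *
        (lam ^ (∑ i, l i) * bellTerm V l) := fun l => by rw [div_pow]; ring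
  have hterm_nonneg : ∀ l : Fin k → ℕ, 0 ≤ lam ^ (∑ i, l i) * bellTerm V l := fun l =>
    mul_nonneg (pow_nonneg hlam.le _) (bellTerm_nonneg (fun i => hVpos _ i.succ_pos) l)
  simp only [hratio] at hE
  rw [hE, hM]
  constructor
  · rw [mul_left_comm, mul_sum]
    gcongr with l hl
    · exact hterm_nonneg l
    · exact one_sub_sq_div_le_descFactorial_div_pow hn
        (le_of_sum_succ_mul_eq (mem_bellTuples.1 hl)).2 hkn
  · refine mul_le_mul_of_nonneg_left (sum_le_sum fun l _ => ?_) (by positivity)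
    exact mul_le_of_le_one_left (hterm_nonneg l) (descFactorial_div_pow_le_one _ _)

/-- Lemma 1.1, non-asymptotic form: for i.i.d. Bernoulli(λ/n) variables
`a_1, …, a_n` and i.i.d. weights `W_1, …, W_n` (independent of the `a`'s) with moments `V_i`,
the `k`-th moment of `∑ a_j W_j` is squeezed between `(1 - k²/(2n)) M_k(λ)` and `M_k(λ)`. -/
theorem stmt0
    {Ω : Type*} [MeasurableSpace Ω] (μ : Measure Ω) [IsProbabilityMeasure μ]
    (n : ℕ) (hn : 1 ≤ n) (lam : ℝ) (hlam : 0 < lam) (hlamn : lam ≤ n)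
    (a W : Fin n → Ω → ℝ) (V : ℕ → ℝ)
    (hVpos : ∀ i : ℕ, 1 ≤ i → 0 ≤ V i)
    (hameas : ∀ j, Measurable (a j)) (hWmeas : ∀ j, Measurable (W j))
    (ha01 : ∀ j ω, a j ω = 0 ∨ a j ω = 1)
    (haP : ∀ j, μ {ω | a j ω = 1} = ENNReal.ofReal (lam / n))
    (hindep : ProbabilityTheory.iIndepFun
      (Sum.elim a W) μ)
    (hident : ∀ j j', ProbabilityTheory.IdentDistrib (W j) (W j') μ μ)
    (hWint : ∀ j, ∀ i : ℕ, 1 ≤ i → Integrable (fun ω => |W j ω| ^ i) μ)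
    (hWmom : ∀ j, ∀ i : ℕ, 1 ≤ i → ∫ ω, (W j ω) ^ i ∂μ = V i)
    (k : ℕ) (hk : 1 ≤ k) (hkn : k ≤ n) :
    (1 - (k : ℝ) ^ 2 / (2 * n)) * weightedBell V k lam ≤
        ∫ ω, (∑ j, a j ω * W j ω) ^ k ∂μ ∧
      ∫ ω, (∑ j, a j ω * W j ω) ^ k ∂μ ≤ weightedBell V k lam :=
  stmt0_general μ n hn lam hlam a W V hVpos hameas hWmeas ha01 haP hindep hWint hWmom k hkn

end
end

section
/- For every x ≥ 0 and every u ∈ [0, u_0), the series Σ_{j=0}^∞ M_j(x)·u^j/j! converges and equals exp( x·(H(u) − 1) ). -/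
open scoped BigOperators ENNReal
open Filter MeasureTheory
open scoped Topology

noncomputable section

namespace Stmt1Aux

open Finset

lemma exp_eq_tsum_real (y : ℝ) : Real.exp y = ∑' n : ℕ, y ^ n / (Nat.factorial n : ℝ) := by
  rw [Real.exp_eq_exp_ℝ, NormedSpace.exp_eq_tsum_div]

/-- Extend a tuple on `Fin N` to a finitely supported function on `ℕ`. -/
def extend (N : ℕ) (g : Fin N → ℕ) : ℕ →₀ ℕ :=
  Finsupp.onFinset (Finset.range N)
    (fun i => if h : i < N then g ⟨i, h⟩ else 0)
    (by intro i hi; rw [Finset.mem_range]; by_contra h; exact hi (dif_neg h))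

lemma extend_apply_lt (N : ℕ) (g : Fin N → ℕ) (i : ℕ) (h : i < N) :
    extend N g i = g ⟨i, h⟩ := by simp [extend, h]

lemma extend_apply_ge (N : ℕ) (g : Fin N → ℕ) (i : ℕ) (h : ¬ i < N) :
    extend N g i = 0 := by simp [extend, h]

lemma extend_support_subset (N : ℕ) (g : Fin N → ℕ) :
    (extend N g).support ⊆ Finset.range N :=
  Finsupp.support_onFinset_subset

lemma extend_injective (N : ℕ) : Function.Injective (extend N) := by
  intro g g' h
  funext i
  have h2 := congrArg (fun m : ℕ →₀ ℕ => m i.1) h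
  simpa [extend_apply_lt N _ i.1 i.2] using h2

variable {c : ℕ → ℝ}

lemma prod_extend (N : ℕ) (g : Fin N → ℕ) :
    (extend N g).prod (fun i k => c i ^ k / (Nat.factorial k : ℝ)) =
      ∏ i : Fin N, c i.1 ^ g i / (Nat.factorial (g i) : ℝ) := by
  classical
  rw [Finsupp.prod_of_support_subset _ (extend_support_subset N g) _ (fun i _ => by simp)]
  rw [← Fin.prod_univ_eq_prod_range
    (fun i => c i ^ (extend N g i) / (Nat.factorial (extend N g i) : ℝ)) N]
  refine Finset.prod_congr rfl fun i _ => ?_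
  rw [extend_apply_lt N g i.1 i.2]

/-- The finset of finsupps supported in `[0, N)` with values `≤ K`. -/
def trunc (N K : ℕ) : Finset (ℕ →₀ ℕ) :=
  (Fintype.piFinset fun _ : Fin N => Finset.range (K + 1)).image (extend N)

lemma sum_trunc (N K : ℕ) :
    ∑ l ∈ trunc N K, l.prod (fun i k => c i ^ k / (Nat.factorial k : ℝ)) =
      ∏ i : Fin N, ∑ k ∈ Finset.range (K + 1), c i.1 ^ k / (Nat.factorial k : ℝ) := by
  rw [trunc, Finset.sum_image (fun g _ g' _ h => extend_injective N h),
    Finset.prod_univ_sum]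
  exact Finset.sum_congr rfl fun g _ => prod_extend N g

lemma mem_trunc {l : ℕ →₀ ℕ} {N K : ℕ} (hsupp : ∀ i ∈ l.support, i < N)
    (hval : ∀ i, l i ≤ K) : l ∈ trunc N K := by
  classical
  refine Finset.mem_image.2 ⟨fun i => l i.1, ?_, ?_⟩
  · rw [Fintype.mem_piFinset]
    intro i
    rw [Finset.mem_range, Nat.lt_succ_iff]
    exact hval i.1
  · ext i
    by_cases h : i < N
    · rw [extend_apply_lt _ _ i h]
    · rw [extend_apply_ge _ _ i h]
      by_contra h0
      exact h (hsupp i (Finsupp.mem_support_iff.2 fun hz => h0 hz.symm))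

lemma prod_nonneg' (hc : ∀ i, 0 ≤ c i) (l : ℕ →₀ ℕ) :
    0 ≤ l.prod (fun i k => c i ^ k / (Nat.factorial k : ℝ)) :=
  Finset.prod_nonneg fun i _ =>
    div_nonneg (pow_nonneg (hc i) _) (Nat.cast_nonneg _)

lemma partial_le_exp {y : ℝ} (hy : 0 ≤ y) (m : ℕ) :
    ∑ k ∈ Finset.range m, y ^ k / (Nat.factorial k : ℝ) ≤ Real.exp y := by
  rw [exp_eq_tsum_real]
  exact Summable.sum_le_tsum _ (fun k _ => div_nonneg (pow_nonneg hy _) (Nat.cast_nonneg _))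
    (Real.summable_pow_div_factorial y)

lemma sum_le_exp (hc : ∀ i, 0 ≤ c i) (hs : Summable c) (T : Finset (ℕ →₀ ℕ)) :
    ∑ l ∈ T, l.prod (fun i k => c i ^ k / (Nat.factorial k : ℝ)) ≤
      Real.exp (∑' i, c i) := by
  classical
  set N := (T.sup fun l => l.support.sup id) + 1 with hN
  set K := T.sup fun l => l.sum fun _ k => k with hK
  have hsub : T ⊆ trunc N K := by
    intro l hl
    apply mem_trunc
    · intro i hi
      have h1 : i ≤ T.sup (fun l => l.support.sup id) :=
        le_trans (Finset.le_sup (f := id) hi)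
          (Finset.le_sup (f := fun l : ℕ →₀ ℕ => l.support.sup id) hl)
      omega
    · intro i
      by_cases h0 : i ∈ l.support
      · exact le_trans
          (Finset.single_le_sum (f := fun j => l j) (fun j _ => Nat.zero_le _) h0)
          (Finset.le_sup (f := fun l => l.sum fun _ k => k) hl)
      · simp [Finsupp.notMem_support_iff.1 h0]
  refine le_trans (Finset.sum_le_sum_of_subset_of_nonneg hsub
    (fun l _ _ => prod_nonneg' hc l)) ?_
  rw [sum_trunc]
  calc ∏ i : Fin N, ∑ k ∈ Finset.range (K + 1), c i.1 ^ k / (Nat.factorial k : ℝ)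
      ≤ ∏ i : Fin N, Real.exp (c i.1) := by
        refine Finset.prod_le_prod (fun i _ => ?_) (fun i _ => partial_le_exp (hc i.1) _)
        exact Finset.sum_nonneg fun k _ =>
          div_nonneg (pow_nonneg (hc i.1) _) (Nat.cast_nonneg _)
    _ = Real.exp (∑ i : Fin N, c i.1) := (Real.exp_sum _ _).symm
    _ ≤ Real.exp (∑' i, c i) := by
        rw [Real.exp_le_exp]
        rw [Fin.sum_univ_eq_sum_range (fun i => c i) N]
        exact Summable.sum_le_tsum _ (fun i _ => hc i) hs

lemma exists_trunc_gt (hc : ∀ i, 0 ≤ c i) (hs : Summable c) {ε : ℝ} (hε : 0 < ε) :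
    ∃ N K, Real.exp (∑' i, c i) - ε <
      ∑ l ∈ trunc N K, l.prod (fun i k => c i ^ k / (Nat.factorial k : ℝ)) := by
  set s := ∑' i, c i with hsdef
  have h1 : Tendsto (fun N => Real.exp (∑ i ∈ Finset.range N, c i)) atTop
      (𝓝 (Real.exp s)) :=
    (Real.continuous_exp.continuousAt.tendsto).comp hs.hasSum.tendsto_sum_nat
  have h2 : Real.exp s - ε / 2 < Real.exp s := by linarith
  obtain ⟨N, hN⟩ := (h1.eventually (eventually_gt_nhds h2)).exists
  have h3 : Tendsto (fun K => ∏ i : Fin N,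
      ∑ k ∈ Finset.range (K + 1), c i.1 ^ k / (Nat.factorial k : ℝ)) atTop
      (𝓝 (∏ i : Fin N, Real.exp (c i.1))) := by
    apply tendsto_finset_prod
    intro i _
    have h := (Real.summable_pow_div_factorial (c i.1)).hasSum.tendsto_sum_nat
    rw [← exp_eq_tsum_real] at h
    exact h.comp (tendsto_add_atTop_nat 1)
  have h4 : Real.exp s - ε < ∏ i : Fin N, Real.exp (c i.1) := by
    have he : ∏ i : Fin N, Real.exp (c i.1) = Real.exp (∑ i ∈ Finset.range N, c i) := by
      rw [← Real.exp_sum, Fin.sum_univ_eq_sum_range (fun i => c i) N]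
    rw [he]
    linarith
  obtain ⟨K, hK⟩ := (h3.eventually (eventually_gt_nhds h4)).exists
  exact ⟨N, K, by rw [sum_trunc]; exact hK⟩

lemma hasSum_finsupp (hc : ∀ i, 0 ≤ c i) (hs : Summable c) :
    HasSum (fun l : ℕ →₀ ℕ => l.prod fun i k => c i ^ k / (Nat.factorial k : ℝ))
      (Real.exp (∑' i, c i)) := by
  apply hasSum_of_isLUB_of_nonneg _ (prod_nonneg' hc)
  constructor
  · rintro y ⟨T, rfl⟩
    exact sum_le_exp hc hs T
  · intro b hb
    by_contra hlt
    push_neg at hlt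
    obtain ⟨N, K, h⟩ := exists_trunc_gt hc hs (sub_pos.2 hlt)
    have h2 := hb (Set.mem_range_self (trunc N K))
    linarith

/-- The weight of a finitely supported multiplicity function. -/
def wt (m : ℕ →₀ ℕ) : ℕ := m.sum fun i k => (i + 1) * k

lemma wt_extend {j : ℕ} {g : Fin j → ℕ} (hg : g ∈ bellTuples j) :
    wt (extend j g) = j := by
  rw [wt, Finsupp.sum_of_support_subset _ (extend_support_subset j g) _
    (fun i _ => by simp)]
  rw [← Fin.sum_univ_eq_sum_range (fun i => (i + 1) * (extend j g i)) j]
  have h := (Finset.mem_filter.1 hg).2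
  refine Eq.trans ?_ h
  refine Finset.sum_congr rfl fun i _ => ?_
  rw [extend_apply_lt j g i.1 i.2]

lemma support_lt_wt (m : ℕ →₀ ℕ) {i : ℕ} (hi : i ∈ m.support) : i < wt m := by
  have h1 : 1 ≤ m i := Nat.one_le_iff_ne_zero.2 (Finsupp.mem_support_iff.1 hi)
  have h2 : (i + 1) * m i ≤ wt m :=
    Finset.single_le_sum (f := fun i => (i + 1) * m i) (fun j _ => Nat.zero_le _) hi
  calc i < (i + 1) * 1 := by omega
    _ ≤ (i + 1) * m i := Nat.mul_le_mul_left _ h1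
    _ ≤ wt m := h2

lemma apply_le_wt (m : ℕ →₀ ℕ) (i : ℕ) : m i ≤ wt m := by
  by_cases h0 : i ∈ m.support
  · have h2 : (i + 1) * m i ≤ wt m :=
      Finset.single_le_sum (f := fun i => (i + 1) * m i) (fun j _ => Nat.zero_le _) h0
    calc m i ≤ (i + 1) * m i := Nat.le_mul_of_pos_left _ (Nat.succ_pos i)
      _ ≤ wt m := h2
  · simp [Finsupp.notMem_support_iff.1 h0]

lemma restrict_mem_bellTuples (m : ℕ →₀ ℕ) :
    (fun i : Fin (wt m) => m i.1) ∈ bellTuples (wt m) := by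
  classical
  rw [bellTuples, Finset.mem_filter]
  constructor
  · rw [Fintype.mem_piFinset]
    intro i
    rw [Finset.mem_range, Nat.lt_succ_iff]
    exact apply_le_wt m i.1
  · rw [Fin.sum_univ_eq_sum_range (fun i => (i + 1) * m i) (wt m)]
    have hsub : m.support ⊆ Finset.range (wt m) := fun i hi =>
      Finset.mem_range.2 (support_lt_wt m hi)
    rw [← Finset.sum_subset hsub (fun i _ hi => by
      simp [Finsupp.notMem_support_iff.1 hi])]
    rfl

lemma extend_restrict (m : ℕ →₀ ℕ) :
    extend (wt m) (fun i : Fin (wt m) => m i.1) = m := by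
  ext i
  by_cases h : i < wt m
  · rw [extend_apply_lt _ _ i h]
  · rw [extend_apply_ge _ _ i h]
    by_contra h0
    exact h (support_lt_wt m (Finsupp.mem_support_iff.2 fun hz => h0 hz.symm))

/-- The bijection between `Σ j, bellTuples j` and finitely supported functions. -/
def sigmaEquiv : (Σ j : ℕ, {l : Fin j → ℕ // l ∈ bellTuples j}) ≃ (ℕ →₀ ℕ) := by
  refine Equiv.ofBijective (fun p => extend p.1 p.2.1) ⟨?_, ?_⟩
  · rintro ⟨j, l, hl⟩ ⟨j', l', hl'⟩ h
    simp only at h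
    obtain rfl : j = j' := by rw [← wt_extend hl, ← wt_extend hl', h]
    obtain rfl : l = l' := extend_injective j h
    rfl
  · intro m
    exact ⟨⟨wt m, ⟨fun i => m i.1, restrict_mem_bellTuples m⟩⟩, extend_restrict m⟩

theorem hasSum_bell (c : ℕ → ℝ) (hc : ∀ i, 0 ≤ c i) (hs : Summable c) :
    HasSum (fun j : ℕ => ∑ l ∈ bellTuples j,
        ∏ i : Fin j, c i.1 ^ (l i) / (Nat.factorial (l i) : ℝ))
      (Real.exp (∑' i, c i)) := by
  have key := hasSum_finsupp hc hs
  have h2 : HasSum (fun p : Σ j : ℕ, {l : Fin j → ℕ // l ∈ bellTuples j} =>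
      ∏ i : Fin p.1, c i.1 ^ (p.2.1 i) / (Nat.factorial (p.2.1 i) : ℝ))
      (Real.exp (∑' i, c i)) := by
    have h3 := (sigmaEquiv.hasSum_iff
      (f := fun l : ℕ →₀ ℕ => l.prod fun i k => c i ^ k / (Nat.factorial k : ℝ))).2 key
    have h4 : (fun l : ℕ →₀ ℕ => l.prod fun i k => c i ^ k / (Nat.factorial k : ℝ)) ∘
        sigmaEquiv = fun p : Σ j : ℕ, {l : Fin j → ℕ // l ∈ bellTuples j} =>
        ∏ i : Fin p.1, c i.1 ^ (p.2.1 i) / (Nat.factorial (p.2.1 i) : ℝ) := by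
      funext p
      exact prod_extend p.1 p.2.1
    rwa [h4] at h3
  apply h2.sigma
  intro j
  have h5 := hasSum_fintype (fun l : {l : Fin j → ℕ // l ∈ bellTuples j} =>
    ∏ i : Fin j, c i.1 ^ (l.1 i) / (Nat.factorial (l.1 i) : ℝ))
  rwa [Finset.sum_coe_sort (bellTuples j)
    (fun l => ∏ i : Fin j, c i.1 ^ (l i) / (Nat.factorial (l i) : ℝ))] at h5

end Stmt1Aux

/-- relation (2.2): for `x ≥ 0` and `u ∈ [0, u_0)`, the series
`∑_j M_j(x) u^j / j!` converges and equals `exp(x (H(u) - 1))`. -/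
theorem stmt1 (V : ℕ → ℝ) (hVpos : ∀ i : ℕ, 1 ≤ i → 0 ≤ V i)
    (u0 : ℝ≥0∞) (hu0 : 0 < u0) (hH : HFinite V u0)
    (x : ℝ) (hx : 0 ≤ x) (u : ℝ) (hu : 0 ≤ u) (huu0 : ENNReal.ofReal u < u0) :
    Summable (fun j : ℕ => weightedBell V j x * u ^ j / (Nat.factorial j : ℝ)) ∧
      ∑' j : ℕ, weightedBell V j x * u ^ j / (Nat.factorial j : ℝ) =
        Real.exp (x * (weightEGF V u - 1)) := by
  classical
  set c : ℕ → ℝ := fun i => x * (V (i + 1) * u ^ (i + 1) / (Nat.factorial (i + 1) : ℝ))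
    with hcdef
  have hc : ∀ i, 0 ≤ c i := fun i =>
    mul_nonneg hx (div_nonneg (mul_nonneg (hVpos (i + 1) (Nat.le_add_left 1 i))
      (pow_nonneg hu _)) (Nat.cast_nonneg _))
  have hs : Summable c := (hH u hu huu0).mul_left x
  have key := Stmt1Aux.hasSum_bell c hc hs
  have hts : ∑' i, c i = x * (weightEGF V u - 1) := by
    rw [weightEGF, add_sub_cancel_left]
    simp only [hcdef]
    exact tsum_mul_left
  have hQ : ∀ j : ℕ, weightedBell V j x * u ^ j / (Nat.factorial j : ℝ)
      = ∑ l ∈ bellTuples j, ∏ i : Fin j, c i.1 ^ (l i) / (Nat.factorial (l i) : ℝ) := by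
    intro j
    have hj : (Nat.factorial j : ℝ) ≠ 0 := Nat.cast_ne_zero.2 (Nat.factorial_ne_zero j)
    have hcancel : ∀ a b e : ℝ, a ≠ 0 → a * b * e / a = b * e := by
      intro a b e ha; field_simp
    rw [weightedBell, hcancel _ _ _ hj, Finset.sum_mul]
    refine Finset.sum_congr rfl fun l hl => ?_
    have hsum' : ∑ i : Fin j, (i.1 + 1) * l i = j := (Finset.mem_filter.1 hl).2
    have hu' : (∏ i : Fin j, (u ^ (i.1 + 1)) ^ (l i)) = u ^ j := by
      simp only [← pow_mul]
      rw [Finset.prod_pow_eq_pow_sum, hsum']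
    calc (∏ i : Fin j, (x * V (i.1 + 1)) ^ (l i) /
          ((Nat.factorial (i.1 + 1) : ℝ) ^ (l i) * (Nat.factorial (l i) : ℝ))) * u ^ j
        = ∏ i : Fin j, ((x * V (i.1 + 1)) ^ (l i) /
            ((Nat.factorial (i.1 + 1) : ℝ) ^ (l i) * (Nat.factorial (l i) : ℝ)) *
            (u ^ (i.1 + 1)) ^ (l i)) := by
          rw [Finset.prod_mul_distrib, hu']
      _ = ∏ i : Fin j, c i.1 ^ (l i) / (Nat.factorial (l i) : ℝ) := by
          refine Finset.prod_congr rfl fun i _ => ?_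
          simp only [hcdef]
          ring
  have key' : HasSum (fun j : ℕ => weightedBell V j x * u ^ j / (Nat.factorial j : ℝ))
      (Real.exp (x * (weightEGF V u - 1))) := by
    rw [show (fun j : ℕ => weightedBell V j x * u ^ j / (Nat.factorial j : ℝ)) =
      (fun j : ℕ => ∑ l ∈ bellTuples j,
        ∏ i : Fin j, c i.1 ^ (l i) / (Nat.factorial (l i) : ℝ)) from funext hQ, ← hts]
    exact key
  exact ⟨key'.summable, key'.tsum_eq⟩

end
end

section
/- (Theorem 1.1, part B, second case of (1.11), even-moment form (1.12).) Assume V_i ≥ 0 for all i ≥ 1, V_1 = 0, V_2 > 0, V_{2j+1} = 0 for all j ≥ 0, and H(u) < ∞ for all u ∈ [0, u_0) with u_0 > 0. Then for every sequence (x_k)_{k≥1} of positive reals with x_k/k → ∞ as k → ∞, one has ( M_{2k}(x_k) )^{1/k} · e / ( 2k·x_k·V_2 ) → 1 as k → ∞. -/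
open scoped BigOperators ENNReal
open Filter MeasureTheory

noncomputable section

/-!
Lower bound: `M_{2k}(x)` contains the term of the partition into `k` blocks of size two,
`(2k)! (x V_2)^k / (2^k k!)`. Upper bound (saddle point): all terms being nonnegative,
`M_n(x) u^n ≤ n! exp (x (H(u) - 1))` for every `u ≥ 0`, and `V_1 = 0` gives
`H(u) - 1 ≤ V_2 u^2 / 2 + O(u^3)` for small `u`. With `u^2 = 2k / (x_k V_2)` the error term is
`x_k O(u^3) = k O(u)`, which is `o(k)` precisely because `x_k / k → ∞`.
After multiplying by `(e / (2k x_k V_2))^k`, both bounds are expressed through the ratios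
`n! / (n/e)^n`, whose `n`-th roots tend to `1` by Stirling's formula.
-/

open Real Topology
open scoped Nat

def stirlingRatio (n : ℕ) : ℝ := n ! / (n / exp 1) ^ n

lemma stirlingRatio_eq_stirlingSeq_mul_sqrt {n : ℕ} (hn : n ≠ 0) :
    stirlingRatio n = Stirling.stirlingSeq n * √(2 * n) := by
  have : 0 < √(2 * n : ℝ) := by positivity
  rw [stirlingRatio, Stirling.stirlingSeq]
  field_simp

lemma tendsto_stirlingRatio_rpow_inv :
    Tendsto (fun n : ℕ => stirlingRatio n ^ (n : ℝ)⁻¹) atTop (𝓝 1) := by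
  have hseq : Tendsto (fun n : ℕ => Stirling.stirlingSeq n ^ (n : ℝ)⁻¹) atTop (𝓝 1) := by
    simpa using Stirling.tendsto_stirlingSeq_sqrt_pi.rpow
      (tendsto_inv_atTop_zero.comp tendsto_natCast_atTop_atTop) (.inl (by positivity))
  have hsqrt : Tendsto (fun n : ℕ => (2 * n : ℝ) ^ (1 / (2 * n : ℝ))) atTop (𝓝 1) :=
    tendsto_rpow_div.comp <| tendsto_natCast_atTop_atTop.const_mul_atTop two_pos
  refine (one_mul (1 : ℝ) ▸ hseq.mul hsqrt).congr' ?_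
  filter_upwards [eventually_ne_atTop 0] with n hn
  have hseq_nonneg : 0 ≤ Stirling.stirlingSeq n := by unfold Stirling.stirlingSeq; positivity
  rw [stirlingRatio_eq_stirlingSeq_mul_sqrt hn, Real.mul_rpow hseq_nonneg (by positivity),
    Real.sqrt_eq_rpow, ← Real.rpow_mul (by positivity)]
  congr 2
  field_simp

lemma stirlingRatio_nonneg (n : ℕ) : 0 ≤ stirlingRatio n := by
  unfold stirlingRatio; positivity

lemma tendsto_stirlingRatio_two_mul_rpow_inv :
    Tendsto (fun k : ℕ => stirlingRatio (2 * k) ^ (k : ℝ)⁻¹) atTop (𝓝 1) := by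
  have h := (tendsto_stirlingRatio_rpow_inv.comp
    (tendsto_id.const_mul_atTop' two_pos)).pow 2
  refine ((one_pow (M := ℝ) 2) ▸ h).congr fun k => ?_
  simp only [Function.comp_apply, id_eq, Nat.cast_mul, Nat.cast_ofNat]
  rw [← Real.rpow_natCast, ← Real.rpow_mul (stirlingRatio_nonneg _)]
  rcases eq_or_ne k 0 with rfl | hk
  · simp
  · congr 1; field_simp; norm_num

lemma tendsto_rpow_inv_of_stirlingRatio_bounds {y δ : ℕ → ℝ} (hδ : Tendsto δ atTop (𝓝 0))
    (hlow : ∀ᶠ k in atTop, stirlingRatio (2 * k) / stirlingRatio k ≤ y k)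
    (hup : ∀ᶠ k in atTop, y k ≤ stirlingRatio (2 * k) * exp (δ k) ^ k) :
    Tendsto (fun k : ℕ => y k ^ (k : ℝ)⁻¹) atTop (𝓝 1) := by
  have h2 := tendsto_stirlingRatio_two_mul_rpow_inv
  have hE : Tendsto (fun k => exp (δ k)) atTop (𝓝 1) :=
    exp_zero ▸ (continuous_exp.tendsto 0).comp hδ
  refine tendsto_of_tendsto_of_tendsto_of_le_of_le'
    (by simpa using h2.div tendsto_stirlingRatio_rpow_inv one_ne_zero)
    (by simpa using h2.mul hE) ?_ ?_
  · filter_upwards [hlow] with k hk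
    rw [Pi.div_apply, ← Real.div_rpow (stirlingRatio_nonneg _) (stirlingRatio_nonneg _)]
    exact Real.rpow_le_rpow (div_nonneg (stirlingRatio_nonneg _) (stirlingRatio_nonneg _)) hk
      (by positivity)
  · filter_upwards [hlow, hup, eventually_ne_atTop 0] with k hkl hku hk
    have hy : 0 ≤ y k :=
      (div_nonneg (stirlingRatio_nonneg _) (stirlingRatio_nonneg _)).trans hkl
    calc y k ^ (k : ℝ)⁻¹ ≤ (stirlingRatio (2 * k) * exp (δ k) ^ k) ^ (k : ℝ)⁻¹ :=
          Real.rpow_le_rpow hy hku (by positivity)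
      _ = stirlingRatio (2 * k) ^ (k : ℝ)⁻¹ * exp (δ k) := by
          rw [Real.mul_rpow (stirlingRatio_nonneg _) (by positivity),
            Real.pow_rpow_inv_natCast (exp_pos _).le hk]

lemma factorial_mul_pow_div_le_weightedBell {V : ℕ → ℝ} (hV : ∀ i, 1 ≤ i → 0 ≤ V i)
    {x : ℝ} (hx : 0 ≤ x) {j m : ℕ} (hj : 1 ≤ j) (hm : 1 ≤ m) :
    ((j * m)! : ℝ) * (x * V j) ^ m / ((j ! : ℝ) ^ m * m !) ≤ weightedBell V (j * m) x := by
  let i₀ : Fin (j * m) := ⟨j - 1, (Nat.sub_lt hj one_pos).trans_le (Nat.le_mul_of_pos_right j hm)⟩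
  let l : Fin (j * m) → ℕ := Pi.single i₀ m
  have hl : l ∈ bellTuples (j * m) := by
    simp only [bellTuples, Finset.mem_filter, Fintype.mem_piFinset, Finset.mem_range]
    refine ⟨fun i => ?_, ?_⟩
    · by_cases hi : i = i₀
      · simp [l, hi]; nlinarith
      · simp [l, hi]
    · rw [Finset.sum_eq_single i₀ (fun i _ hi => by simp [l, hi]) (by simp)]
      simp [l, i₀, Nat.sub_add_cancel hj]
  have hterm : ∏ i : Fin (j * m), (x * V (i.1 + 1)) ^ l i /
      ((Nat.factorial (i.1 + 1) : ℝ) ^ l i * (Nat.factorial (l i) : ℝ))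
      = (x * V j) ^ m / ((j ! : ℝ) ^ m * m !) := by
    rw [Finset.prod_eq_single i₀ (fun i _ hi => by simp [l, hi]) (by simp)]
    simp [l, i₀, Nat.sub_add_cancel hj]
  rw [weightedBell, mul_div_assoc, ← hterm]
  refine mul_le_mul_of_nonneg_left (Finset.single_le_sum (f := fun l => ∏ i : Fin (j * m),
    (x * V (i.1 + 1)) ^ l i / ((Nat.factorial (i.1 + 1) : ℝ) ^ l i * (Nat.factorial (l i) : ℝ)))
    (fun l _ => Finset.prod_nonneg fun i _ => ?_) hl) (by positivity)
  have := hV (i.1 + 1) (by omega)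
  positivity

lemma weightedBell_nonneg {V : ℕ → ℝ} (hV : ∀ i, 1 ≤ i → 0 ≤ V i) {x : ℝ} (hx : 0 ≤ x) (n : ℕ) :
    0 ≤ weightedBell V n x := by
  refine mul_nonneg (by positivity) (Finset.sum_nonneg fun l _ => Finset.prod_nonneg fun i _ => ?_)
  have := hV (i.1 + 1) (by omega)
  positivity

lemma weightedBell_mul_pow_le {V : ℕ → ℝ} (hV : ∀ i, 1 ≤ i → 0 ≤ V i) {x u : ℝ} (hx : 0 ≤ x)
    (hu : 0 ≤ u) (n : ℕ) :
    weightedBell V n x * u ^ n ≤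
      n ! * exp (x * ∑ i ∈ Finset.range n, V (i + 1) * u ^ (i + 1) / (i + 1)!) := by
  set a : Fin n → ℝ := fun i => x * V (i.1 + 1) * u ^ (i.1 + 1) / (i.1 + 1)! with ha
  have ha0 : ∀ i, 0 ≤ a i := fun i => by have := hV (i.1 + 1) (by omega); positivity
  have hterm : ∀ l ∈ bellTuples n, (∏ i : Fin n, (x * V (i.1 + 1)) ^ l i /
      ((Nat.factorial (i.1 + 1) : ℝ) ^ l i * (Nat.factorial (l i) : ℝ))) * u ^ n
      = ∏ i : Fin n, a i ^ l i / (l i)! := by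
    intro l hl
    have hun : u ^ n = ∏ i : Fin n, (u ^ (i.1 + 1)) ^ l i := by
      simp only [← pow_mul, Finset.prod_pow_eq_pow_sum, (Finset.mem_filter.mp hl).2]
    rw [hun, ← Finset.prod_mul_distrib]
    refine Finset.prod_congr rfl fun i _ => ?_
    rw [ha, div_pow, mul_pow, mul_pow]
    field_simp
    ring
  have hsum_le_exp : ∑ l ∈ bellTuples n, ∏ i : Fin n, a i ^ l i / (l i)! ≤ exp (∑ i, a i) :=
    calc ∑ l ∈ bellTuples n, ∏ i : Fin n, a i ^ l i / (l i)!
        ≤ ∑ l ∈ Fintype.piFinset fun _ : Fin n => Finset.range (n + 1),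
            ∏ i : Fin n, a i ^ l i / (l i)! :=
          Finset.sum_le_sum_of_subset_of_nonneg (Finset.filter_subset _ _)
            fun l _ _ => Finset.prod_nonneg fun i _ => by have := ha0 i; positivity
      _ = ∏ i : Fin n, ∑ m ∈ Finset.range (n + 1), a i ^ m / m ! := by rw [Finset.prod_univ_sum]
      _ ≤ ∏ i : Fin n, exp (a i) :=
          Finset.prod_le_prod (fun i _ => Finset.sum_nonneg fun m _ => by
            have := ha0 i; positivity) fun i _ => Real.sum_le_exp_of_nonneg (ha0 i) _
      _ = exp (∑ i, a i) := (Real.exp_sum _ _).symm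
  rw [weightedBell, mul_assoc, Finset.sum_mul, Finset.sum_congr rfl hterm,
    ← Fin.sum_univ_eq_sum_range (fun i => V (i + 1) * u ^ (i + 1) / (i + 1)!)]
  refine mul_le_mul_of_nonneg_left (hsum_le_exp.trans_eq ?_) (by positivity)
  simp only [ha, Finset.mul_sum, mul_assoc, mul_div_assoc]

lemma sum_range_le_sq_add_cube_mul_tsum {V : ℕ → ℝ} (hV : ∀ i, 1 ≤ i → 0 ≤ V i) (hV1 : V 1 = 0)
    {u ρ : ℝ} (hu : 0 ≤ u) (hρ : 0 < ρ) (huρ : u ≤ ρ)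
    (hsum : Summable fun i : ℕ => V (i + 1) * ρ ^ (i + 1) / (i + 1)!) (n : ℕ) :
    ∑ i ∈ Finset.range n, V (i + 1) * u ^ (i + 1) / (i + 1)! ≤
      V 2 * u ^ 2 / 2 + (u / ρ) ^ 3 * ∑' i : ℕ, V (i + 1) * ρ ^ (i + 1) / (i + 1)! := by
  have hterm (i : ℕ) : V (i + 1) * u ^ (i + 1) / (i + 1)! ≤
      (if i = 1 then V 2 * u ^ 2 / 2 else 0) +
        (u / ρ) ^ 3 * (V (i + 1) * ρ ^ (i + 1) / (i + 1)!) := by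
    have hVi := hV (i + 1) (by omega)
    match i with
    | 0 => simp [hV1]
    | 1 => norm_num at hVi ⊢; positivity
    | i + 2 =>
      have hpow : (u / ρ) ^ (i + 3) ≤ (u / ρ) ^ 3 :=
        pow_le_pow_of_le_one (by positivity) ((div_le_one hρ).mpr huρ) (by omega)
      calc V (i + 3) * u ^ (i + 3) / (i + 3)!
          = (u / ρ) ^ (i + 3) * (V (i + 3) * ρ ^ (i + 3) / (i + 3)!) := by
            rw [div_pow]; field_simp
        _ ≤ (u / ρ) ^ 3 * (V (i + 3) * ρ ^ (i + 3) / (i + 3)!) := by gcongr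
        _ = _ := by simp
  calc ∑ i ∈ Finset.range n, V (i + 1) * u ^ (i + 1) / (i + 1)!
      ≤ ∑ i ∈ Finset.range n, ((if i = 1 then V 2 * u ^ 2 / 2 else 0) +
          (u / ρ) ^ 3 * (V (i + 1) * ρ ^ (i + 1) / (i + 1)!)) :=
        Finset.sum_le_sum fun i _ => hterm i
    _ ≤ V 2 * u ^ 2 / 2 + (u / ρ) ^ 3 * ∑' i : ℕ, V (i + 1) * ρ ^ (i + 1) / (i + 1)! := by
      rw [Finset.sum_add_distrib, Finset.sum_ite_eq', ← Finset.mul_sum]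
      gcongr
      · split_ifs
        · rfl
        · have := hV 2 (by norm_num); positivity
      · exact hsum.sum_le_tsum _ fun i _ => by have := hV (i + 1) (by omega); positivity

lemma stirlingRatio_div_le_weightedBell_mul_pow {V : ℕ → ℝ} (hV : ∀ i, 1 ≤ i → 0 ≤ V i)
    (hV2 : 0 < V 2) {x : ℝ} (hx : 0 < x) {k : ℕ} (hk : 1 ≤ k) :
    stirlingRatio (2 * k) / stirlingRatio k ≤
      weightedBell V (2 * k) x * (exp 1 / (2 * k * x * V 2)) ^ k := by
  calc stirlingRatio (2 * k) / stirlingRatio k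
      = (2 * k)! * (x * V 2) ^ k / ((2 ! : ℝ) ^ k * k !) * (exp 1 / (2 * k * x * V 2)) ^ k := by
        simp only [stirlingRatio, Nat.cast_mul, Nat.cast_ofNat, div_pow, mul_pow, pow_mul,
          Nat.factorial_two]
        field_simp
        ring_nf
        rw [pow_mul' (2 : ℝ) k 2]
        norm_num
    _ ≤ weightedBell V (2 * k) x * (exp 1 / (2 * k * x * V 2)) ^ k := by
        gcongr
        exact factorial_mul_pow_div_le_weightedBell hV hx.le (by norm_num) hk

lemma weightedBell_mul_pow_le_stirlingRatio {V : ℕ → ℝ} (hV : ∀ i, 1 ≤ i → 0 ≤ V i)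
    (hV1 : V 1 = 0) (hV2 : 0 < V 2) {ρ : ℝ} (hρ : 0 < ρ)
    (hsum : Summable fun i : ℕ => V (i + 1) * ρ ^ (i + 1) / (i + 1)!)
    {x u : ℝ} (hx : 0 < x) {k : ℕ} (hu : 0 < u) (hu2 : x * V 2 * u ^ 2 = 2 * k) (huρ : u ≤ ρ) :
    weightedBell V (2 * k) x * (exp 1 / (2 * k * x * V 2)) ^ k ≤ stirlingRatio (2 * k) *
      exp (2 * u * (∑' i : ℕ, V (i + 1) * ρ ^ (i + 1) / (i + 1)!) / (V 2 * ρ ^ 3)) ^ k := by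
  set S := ∑' i : ℕ, V (i + 1) * ρ ^ (i + 1) / (i + 1)!
  have hk0 : (0 : ℝ) < k := by nlinarith [mul_pos (mul_pos hx hV2) (pow_pos hu 2)]
  have hexponent : x * ∑ i ∈ Finset.range (2 * k), V (i + 1) * u ^ (i + 1) / (i + 1)! ≤
      k + k * (2 * u * S / (V 2 * ρ ^ 3)) :=
    calc _ ≤ x * (V 2 * u ^ 2 / 2 + (u / ρ) ^ 3 * S) :=
          mul_le_mul_of_nonneg_left
            (sum_range_le_sq_add_cube_mul_tsum hV hV1 hu.le hρ huρ hsum _) hx.le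
      _ = k + k * (2 * u * S / (V 2 * ρ ^ 3)) := by
          field_simp
          linear_combination (2 * u * S + V 2 * ρ ^ 3) * hu2
  have hc : exp 1 / (2 * k * x * V 2) = u ^ 2 * (exp 1 / (2 * k) ^ 2) := by
    field_simp
    linear_combination -hu2
  calc weightedBell V (2 * k) x * (exp 1 / (2 * k * x * V 2)) ^ k
      = weightedBell V (2 * k) x * u ^ (2 * k) * (exp 1 / (2 * k) ^ 2) ^ k := by
        rw [hc, mul_pow, pow_mul, mul_assoc]
    _ ≤ (2 * k)! * exp (k + k * (2 * u * S / (V 2 * ρ ^ 3))) * (exp 1 / (2 * k) ^ 2) ^ k := by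
        refine mul_le_mul_of_nonneg_right ((weightedBell_mul_pow_le hV hx.le hu.le _).trans ?_)
          (by positivity)
        gcongr
    _ = stirlingRatio (2 * k) * exp (2 * u * S / (V 2 * ρ ^ 3)) ^ k := by
        rw [exp_add, exp_nat_mul, ← exp_one_pow]
        simp only [stirlingRatio, Nat.cast_mul, Nat.cast_ofNat, div_pow, mul_pow, pow_mul]
        field_simp
        ring

lemma HFinite.exists_summable {V : ℕ → ℝ} {u0 : ℝ≥0∞} (hH : HFinite V u0) (hu0 : 0 < u0) :
    ∃ ρ > 0, Summable fun i : ℕ => V (i + 1) * ρ ^ (i + 1) / (i + 1)! := by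
  obtain ⟨c, hc0, hcu⟩ := exists_between hu0
  have hc : c ≠ ⊤ := (hcu.trans_le le_top).ne
  exact ⟨c.toReal, ENNReal.toReal_pos hc0.ne' hc,
    hH _ ENNReal.toReal_nonneg (by rwa [ENNReal.ofReal_toReal hc])⟩

lemma tendsto_sqrt_mul_div_of_tendsto_div_atTop {x : ℕ → ℝ}
    (hx : Tendsto (fun k : ℕ => x k / k) atTop atTop) (c : ℝ) :
    Tendsto (fun k : ℕ => √(c * k / x k)) atTop (𝓝 0) := by
  have := (hx.inv_tendsto_atTop.const_mul c).sqrt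
  rw [mul_zero, Real.sqrt_zero] at this
  refine this.congr fun k => ?_
  rw [Pi.inv_apply, inv_div, mul_div_assoc]

theorem stmt5_general (V : ℕ → ℝ) (hVpos : ∀ i : ℕ, 1 ≤ i → 0 ≤ V i)
    (hV1 : V 1 = 0) (hV2 : 0 < V 2)
    (u0 : ℝ≥0∞) (hu0 : 0 < u0) (hH : HFinite V u0)
    (x : ℕ → ℝ) (hx : ∀ k, 0 < x k)
    (hxinf : Tendsto (fun k : ℕ => x k / (k : ℝ)) atTop atTop) :
    Tendsto (fun k : ℕ =>
        (weightedBell V (2 * k) (x k)) ^ ((k : ℝ)⁻¹) * Real.exp 1 / (2 * k * x k * V 2))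
      atTop (nhds 1) := by
  obtain ⟨ρ, hρ, hsum⟩ := hH.exists_summable hu0
  set S := ∑' i : ℕ, V (i + 1) * ρ ^ (i + 1) / (i + 1)!
  -- the saddle point of `u ↦ u ^ (-2k) * exp (x_k V_2 u ^ 2 / 2)`
  set u : ℕ → ℝ := fun k => √(2 / V 2 * k / x k)
  have hu : Tendsto u atTop (𝓝 0) := tendsto_sqrt_mul_div_of_tendsto_div_atTop hxinf _
  have hδ : Tendsto (fun k => 2 * u k * S / (V 2 * ρ ^ 3)) atTop (𝓝 0) := by
    simpa using ((hu.const_mul 2).mul_const S).div_const (V 2 * ρ ^ 3)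
  refine (tendsto_rpow_inv_of_stirlingRatio_bounds
    (y := fun k => weightedBell V (2 * k) (x k) * (exp 1 / (2 * k * x k * V 2)) ^ k)
    hδ ?_ ?_).congr' ?_
  · filter_upwards [eventually_ge_atTop 1] with k hk
    exact stirlingRatio_div_le_weightedBell_mul_pow hVpos hV2 (hx k) hk
  · filter_upwards [eventually_gt_atTop 0, hu.eventually (eventually_le_nhds hρ)] with k hk hkρ
    have hxk := hx k
    refine weightedBell_mul_pow_le_stirlingRatio hVpos hV1 hV2 hρ hsum hxk
      (Real.sqrt_pos.2 (by positivity)) ?_ hkρ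
    rw [Real.sq_sqrt (by positivity)]
    field_simp
  · filter_upwards [eventually_ne_atTop 0] with k hk
    have hxk := hx k
    rw [Real.mul_rpow (weightedBell_nonneg hVpos hxk.le _) (by positivity),
      Real.pow_rpow_inv_natCast (by positivity) hk, mul_div_assoc]

/-- Theorem 1.1, part B, second case of (1.11), even-moment form (1.12):
if `V_1 = 0`, `V_2 > 0`, all odd moments vanish and `x_k / k → ∞`, then
`(M_{2k}(x_k))^{1/k} · e / (2 k x_k V_2) → 1`. -/
theorem stmt5 (V : ℕ → ℝ) (hVpos : ∀ i : ℕ, 1 ≤ i → 0 ≤ V i)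
    (hV1 : V 1 = 0) (hV2 : 0 < V 2) (hVodd : ∀ j : ℕ, V (2 * j + 1) = 0)
    (u0 : ℝ≥0∞) (hu0 : 0 < u0) (hH : HFinite V u0)
    (x : ℕ → ℝ) (hx : ∀ k, 0 < x k)
    (hxinf : Tendsto (fun k : ℕ => x k / (k : ℝ)) atTop atTop) :
    Tendsto (fun k : ℕ =>
        (weightedBell V (2 * k) (x k)) ^ ((k : ℝ)⁻¹) * Real.exp 1 / (2 * k * x k * V 2))
      atTop (nhds 1) :=
  stmt5_general V hVpos hV1 hV2 u0 hu0 hH x hx hxinf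
end
end

section
/- (Identity (3.29).) For every integer k ≥ 1 and every real x, Σ x^{l_1 + l_2 + ⋯ + l_k} / ( l_1!·l_2!⋯l_k! ) = Σ_{p=1}^k ( x^p/p! )·C(k−1, p−1), where the left-hand sum runs over all tuples (l_1, …, l_k) of nonnegative integers with l_1 + 2·l_2 + ⋯ + k·l_k = k, and C(a,b) denotes the binomial coefficient. -/
open scoped BigOperators ENNReal
open Filter MeasureTheory

noncomputable section

open Finset Polynomial
private lemma geom_coeff_one (N : ℕ) : ∀ m < N,
    (∑ i ∈ Finset.range N, (Polynomial.X : Polynomial ℕ) ^ i).coeff m = 1 := by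
  intro m hm
  rw [Polynomial.finset_sum_coeff]
  simp only [Polynomial.coeff_X_pow]
  rw [Finset.sum_ite_eq (Finset.range N) m (fun _ => 1)]
  simp [hm]

private lemma geom_pow_coeff (N : ℕ) : ∀ p : ℕ, ∀ n < N,
    ((∑ i ∈ Finset.range N, (Polynomial.X : Polynomial ℕ) ^ i) ^ (p + 1)).coeff n
      = Nat.choose (n + p) p := by
  intro p
  induction p with
  | zero => intro n hn; simpa using geom_coeff_one N n hn
  | succ p ih =>
    intro n hn
    rw [pow_succ', Polynomial.coeff_mul, Finset.Nat.sum_antidiagonal_eq_sum_range_succ_mk]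
    have h1 : ∀ a ∈ Finset.range (n + 1),
        (∑ i ∈ Finset.range N, (Polynomial.X : Polynomial ℕ) ^ i).coeff a *
          ((∑ i ∈ Finset.range N, (Polynomial.X : Polynomial ℕ) ^ i) ^ (p + 1)).coeff (n - a)
        = Nat.choose (n - a + p) p := by
      intro a ha
      rw [Finset.mem_range] at ha
      rw [geom_coeff_one N a (by omega), ih (n - a) (by omega), one_mul]
    rw [Finset.sum_congr rfl h1]
    have h2 : ∑ a ∈ Finset.range (n + 1), Nat.choose (n - a + p) p
        = ∑ b ∈ Finset.range (n + 1), Nat.choose (b + p) p := by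
      rw [← Finset.sum_range_reflect]
      refine Finset.sum_congr rfl fun b hb => ?_
      rw [Finset.mem_range] at hb
      congr 2
      omega
    rw [h2]
    have h3 : ∀ n : ℕ, ∑ b ∈ Finset.range (n + 1), Nat.choose (b + p) p
        = ∑ m ∈ Finset.Icc p (n + p), Nat.choose m p := by
      intro n
      induction n with
      | zero => simp
      | succ n ihn =>
        rw [Finset.sum_range_succ, ihn, show n + 1 + p = (n + p) + 1 by omega,
          Finset.sum_Icc_succ_top (by omega)]
    rw [h3 n, Nat.sum_Icc_choose]; congr 1

private lemma count_comp (k p : ℕ) (hp : 1 ≤ p) (hpk : p ≤ k) :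
    ∑ l ∈ (Finset.piAntidiag (Finset.univ : Finset (Fin k)) p).filter
        (fun l => ∑ i, (i.1 + 1) * l i = k), Nat.multinomial Finset.univ l
      = Nat.choose (k - 1) (p - 1) := by
  classical
  have hleft : ((Polynomial.X : Polynomial ℕ) ^ p *
      (∑ i ∈ Finset.range k, (Polynomial.X : Polynomial ℕ) ^ i) ^ p).coeff k
      = Nat.choose (k - 1) (p - 1) := by
    have h1 := Polynomial.coeff_X_pow_mul
      ((∑ i ∈ Finset.range k, (Polynomial.X : Polynomial ℕ) ^ i) ^ p) p (k - p)
    rw [show k - p + p = k by omega] at h1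
    rw [h1]
    have h2 := geom_pow_coeff k (p - 1) (k - p) (by omega)
    rw [show p - 1 + 1 = p by omega] at h2
    rw [h2]
    congr 1
    omega
  have hright : ∀ l : Fin k → ℕ,
      ((Nat.multinomial Finset.univ l : Polynomial ℕ) *
        ∏ i : Fin k, ((Polynomial.X : Polynomial ℕ) ^ (i.1 + 1)) ^ l i).coeff k
      = if (∑ i : Fin k, (i.1 + 1) * l i) = k then Nat.multinomial Finset.univ l else 0 := by
    intro l
    have hprod : (∏ i : Fin k, ((Polynomial.X : Polynomial ℕ) ^ (i.1 + 1)) ^ l i)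
        = Polynomial.X ^ (∑ i : Fin k, (i.1 + 1) * l i) := by
      simp_rw [← pow_mul]
      exact Finset.prod_pow_eq_pow_sum _ _ _
    rw [hprod, ← Polynomial.C_eq_natCast, Polynomial.coeff_C_mul, Polynomial.coeff_X_pow]
    rcases eq_or_ne (∑ i : Fin k, (i.1 + 1) * l i) k with h | h
    · rw [if_pos h, h, if_pos rfl, mul_one]; exact Nat.cast_id _
    · rw [if_neg h, if_neg fun hh => h hh.symm, mul_zero]
  have key := Finset.sum_pow_eq_sum_piAntidiag (Finset.univ : Finset (Fin k))
      (fun i : Fin k => (Polynomial.X : Polynomial ℕ) ^ (i.1 + 1)) p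
  have hL : (∑ i : Fin k, (Polynomial.X : Polynomial ℕ) ^ (i.1 + 1))
      = Polynomial.X * ∑ i ∈ Finset.range k, (Polynomial.X : Polynomial ℕ) ^ i := by
    rw [Finset.mul_sum,
      ← Fin.sum_univ_eq_sum_range (fun i => Polynomial.X * (Polynomial.X : Polynomial ℕ) ^ i) k]
    exact Finset.sum_congr rfl fun i _ => by rw [pow_succ']
  rw [hL, mul_pow] at key
  have hcoeff := congrArg (fun q => Polynomial.coeff q k) key
  rw [hleft, Polynomial.finset_sum_coeff,
    Finset.sum_congr rfl (fun l _ => hright l), ← Finset.sum_filter] at hcoeff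
  exact hcoeff.symm

private lemma bell_fiber (k p : ℕ) :
    (bellTuples k).filter (fun l => ∑ i, l i = p) =
      (Finset.piAntidiag (Finset.univ : Finset (Fin k)) p).filter
        (fun l => ∑ i, (i.1 + 1) * l i = k) := by
  ext l
  simp only [bellTuples, Finset.mem_filter, Fintype.mem_piFinset, Finset.mem_range,
    Finset.mem_piAntidiag, Finset.mem_univ, implies_true, and_true, ne_eq]
  constructor
  · rintro ⟨⟨_, hsum⟩, hpl⟩
    exact ⟨hpl, hsum⟩
  · rintro ⟨hpl, hsum⟩
    refine ⟨⟨fun i => ?_, hsum⟩, hpl⟩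
    have h1 : (i.1 + 1) * l i ≤ ∑ j, (j.1 + 1) * l j :=
      Finset.single_le_sum (f := fun j : Fin k => (j.1 + 1) * l j)
        (fun j _ => Nat.zero_le _) (Finset.mem_univ i)
    have h2 : l i ≤ (i.1 + 1) * l i := Nat.le_mul_of_pos_left _ (Nat.succ_pos _)
    omega


/-- identity (3.29): `∑ x^{l_1+⋯+l_k}/(l_1!⋯l_k!) = ∑_{p=1}^k (x^p/p!) C(k−1,p−1)`,
the sum on the left running over all `(l_1,…,l_k)` with `l_1 + 2 l_2 + ⋯ + k l_k = k`. -/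
theorem stmt15 (k : ℕ) (hk : 1 ≤ k) (x : ℝ) :
    ∑ l ∈ bellTuples k, x ^ (∑ i, l i) / ∏ i, (Nat.factorial (l i) : ℝ) =
      ∑ p ∈ Finset.Icc 1 k, x ^ p / (Nat.factorial p : ℝ) * (Nat.choose (k - 1) (p - 1) : ℝ) := by
  classical
  have hmaps : ∀ l ∈ bellTuples k, (∑ i, l i) ∈ Finset.Icc 1 k := by
    intro l hl
    simp only [bellTuples, Finset.mem_filter] at hl
    obtain ⟨-, hsum⟩ := hl
    rw [Finset.mem_Icc]
    refine ⟨?_, ?_⟩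
    · by_contra h
      push_neg at h
      have h0 : ∀ i, l i = 0 := by
        intro i
        have := Finset.single_le_sum (f := l) (fun j _ => Nat.zero_le _) (Finset.mem_univ i)
        omega
      have : ∑ i : Fin k, (i.1 + 1) * l i = 0 := by
        apply Finset.sum_eq_zero; intro i _; rw [h0 i, mul_zero]
      omega
    · calc ∑ i, l i ≤ ∑ i, (i.1 + 1) * l i :=
            Finset.sum_le_sum fun i _ => Nat.le_mul_of_pos_left _ (Nat.succ_pos _)
        _ = k := hsum
  rw [← Finset.sum_fiberwise_of_maps_to hmaps
    (fun l => x ^ (∑ i, l i) / ∏ i, (Nat.factorial (l i) : ℝ))]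
  refine Finset.sum_congr rfl fun p hp => ?_
  rw [Finset.mem_Icc] at hp
  have hterm : ∀ l ∈ (bellTuples k).filter (fun l => ∑ i, l i = p),
      x ^ (∑ i, l i) / ∏ i, (Nat.factorial (l i) : ℝ)
        = x ^ p / (Nat.factorial p : ℝ) * (Nat.multinomial Finset.univ l : ℝ) := by
    intro l hl
    rw [Finset.mem_filter] at hl
    obtain ⟨-, hlp⟩ := hl
    have hspec := Nat.multinomial_spec (Finset.univ : Finset (Fin k)) l
    rw [hlp] at hspec
    have hcast : (∏ i, (Nat.factorial (l i) : ℝ)) * (Nat.multinomial Finset.univ l : ℝ)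
        = (Nat.factorial p : ℝ) := by
      rw [← Nat.cast_prod, ← Nat.cast_mul, hspec]
    have h0 : (∏ i, (Nat.factorial (l i) : ℝ)) ≠ 0 := by positivity
    have h1 : (Nat.factorial p : ℝ) ≠ 0 := by positivity
    rw [hlp]
    field_simp
    rw [← hcast]
    ring
  rw [Finset.sum_congr rfl hterm, ← Finset.mul_sum, ← Nat.cast_sum, bell_fiber k p,
    count_comp k p hp.1 hp.2]


end
end

section
/- (Identity (3.33).) For every integer k ≥ 1 and every real x, Σ x^{l_1 + l_2 + ⋯ + l_k} / ( l_1!·l_2!⋯l_k! · 1^{l_1}·2^{l_2}⋯k^{l_k} ) = x·(x+1)·(x+2)⋯(x+k−1) / k!, where the sum runs over all tuples (l_1, …, l_k) of nonnegative integers with l_1 + 2·l_2 + ⋯ + k·l_k = k. -/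
/-!
Write the summand as `∏ i, (x / i) ^ l_i / l_i!` and let `S n` be the sum of these terms over the
multiplicity vectors of the partitions of `n`. Since `n = ∑ i, i * l_i`, and `i * l_i` times the term
of `l` is `x` times the term of `l` with one part `i` removed, `n * S n = x * (S 0 + ⋯ + S (n - 1))`.
The numbers `x (x + 1) ⋯ (x + n - 1) / n!` satisfy the same recursion and start from the same
value `1`.
-/

open scoped BigOperators ENNReal
open Filter MeasureTheory

noncomputable section

open Finset

section CycleIndex

variable {K : Type*} [Field K] {m : ℕ}

/-- `l i` is the multiplicity of the part `i + 1`. -/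
def partitionMultiplicities (m n : ℕ) : Finset (Fin m → ℕ) :=
  (Fintype.piFinset fun _ => range (n + 1)).filter (fun l => ∑ i, (i.1 + 1) * l i = n)

theorem mem_partitionMultiplicities {n : ℕ} {l : Fin m → ℕ} :
    l ∈ partitionMultiplicities m n ↔ ∑ i, (i.1 + 1) * l i = n := by
  refine ⟨fun h => (mem_filter.mp h).2, fun h => mem_filter.mpr ⟨?_, h⟩⟩
  refine Fintype.mem_piFinset.mpr fun i => mem_range.mpr (Nat.lt_succ_of_le ?_)
  calc l i ≤ (i.1 + 1) * l i := Nat.le_mul_of_pos_left _ i.1.succ_pos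
    _ ≤ n := h ▸ single_le_sum (f := fun j : Fin m => (j.1 + 1) * l j) (by simp) (mem_univ i)

theorem eq_zero_of_mem_partitionMultiplicities {n : ℕ} {l : Fin m → ℕ}
    (hl : l ∈ partitionMultiplicities m n) {j : Fin m} (hj : n < j.1 + 1) : l j = 0 := by
  have : (j.1 + 1) * l j ≤ n := mem_partitionMultiplicities.mp hl ▸
    single_le_sum (f := fun i : Fin m => (i.1 + 1) * l i) (by simp) (mem_univ j)
  by_contra h
  exact absurd (this.trans_lt hj) (not_lt.mpr (Nat.le_mul_of_pos_right _ (Nat.pos_of_ne_zero h)))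

theorem partitionMultiplicities_zero : partitionMultiplicities m 0 = {0} :=
  eq_singleton_iff_unique_mem.mpr ⟨mem_partitionMultiplicities.mpr (by simp),
    fun _ hl => funext fun _ => eq_zero_of_mem_partitionMultiplicities hl (Nat.succ_pos _)⟩

theorem add_single_mem_partitionMultiplicities_iff {n : ℕ} {l : Fin m → ℕ} (j : Fin m) :
    l + Pi.single j 1 ∈ partitionMultiplicities m (n + (j.1 + 1)) ↔
      l ∈ partitionMultiplicities m n := by
  simp only [mem_partitionMultiplicities, Pi.add_apply, mul_add, sum_add_distrib]
  simp [Pi.single_apply]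

def cycleIndexTerm (a : Fin m → K) (l : Fin m → ℕ) : K :=
  ∏ i, a i ^ l i / (l i).factorial

theorem cycleIndexTerm_div_succ (x : K) (l : Fin m → ℕ) :
    cycleIndexTerm (fun i => x / (i.1 + 1)) l =
      x ^ (∑ i, l i) / ((∏ i, ((l i).factorial : K)) * ∏ i : Fin m, ((i.1 + 1 : ℕ) : K) ^ l i) := by
  simp only [cycleIndexTerm, div_pow, prod_div_distrib, prod_pow_eq_pow_sum, div_div]
  push_cast
  rw [prod_mul_distrib, mul_comm]

theorem cycleIndexTerm_add_single [CharZero K] (a : Fin m → K) (l : Fin m → ℕ) (j : Fin m) :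
    (l j + 1 : K) * cycleIndexTerm a (l + Pi.single j 1) = a j * cycleIndexTerm a l := by
  simp only [cycleIndexTerm, Fintype.prod_eq_mul_prod_compl j, Pi.add_apply, Pi.single_eq_same]
  have hcompl : ∀ i ∈ ({j}ᶜ : Finset (Fin m)), l i + (Pi.single j 1 : Fin m → ℕ) i = l i :=
    fun i hi => by rw [Pi.single_eq_of_ne (by simpa using hi), add_zero]
  rw [prod_congr rfl fun i hi => by rw [hcompl i hi], Nat.factorial_succ]
  push_cast
  rw [pow_succ]
  field_simp

theorem sum_mul_cycleIndexTerm_add [CharZero K] (a : Fin m → K) (j : Fin m) (n : ℕ) :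
    ∑ l ∈ partitionMultiplicities m (n + (j.1 + 1)), (l j : K) * cycleIndexTerm a l =
      a j * ∑ l ∈ partitionMultiplicities m n, cycleIndexTerm a l := by
  have hsub : ∀ l : Fin m → ℕ, l j ≠ 0 → l - Pi.single j 1 + Pi.single j 1 = l := fun l hl => by
    ext i
    rcases eq_or_ne i j with rfl | hi
    · simp; omega
    · simp [hi]
  rw [← sum_filter_of_ne (p := fun l => l j ≠ 0) fun l _ h hl => h (by rw [hl]; simp), mul_sum]
  symm
  refine sum_nbij' (· + Pi.single j 1) (· - Pi.single j 1) (fun l hl => ?_) (fun l hl => ?_)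
    (fun l _ => add_tsub_cancel_right l _) (fun l hl => hsub l (mem_filter.mp hl).2)
    (fun l _ => ?_)
  · exact mem_filter.mpr ⟨(add_single_mem_partitionMultiplicities_iff j).mpr hl, by simp⟩
  · obtain ⟨hl, hj⟩ := mem_filter.mp hl
    rw [← add_single_mem_partitionMultiplicities_iff j, hsub l hj]
    exact hl
  · rw [← cycleIndexTerm_add_single]
    simp

theorem natCast_mul_sum_cycleIndexTerm [CharZero K] (a : Fin m → K) (n : ℕ) :
    (n : K) * ∑ l ∈ partitionMultiplicities m n, cycleIndexTerm a l =
      ∑ j : Fin m, if j.1 + 1 ≤ n then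
        (j.1 + 1 : K) * a j * ∑ l ∈ partitionMultiplicities m (n - (j.1 + 1)), cycleIndexTerm a l
      else 0 := by
  have hn : ∀ l ∈ partitionMultiplicities m n,
      (n : K) * cycleIndexTerm a l = ∑ j : Fin m, (j.1 + 1 : K) * (l j * cycleIndexTerm a l) := by
    intro l hl
    simp_rw [← mul_assoc, ← sum_mul]
    exact_mod_cast congrArg (fun n : ℕ => (n : K) * cycleIndexTerm a l)
      (mem_partitionMultiplicities.mp hl).symm
  rw [mul_sum, sum_congr rfl hn, sum_comm]
  refine sum_congr rfl fun j _ => ?_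
  rw [← mul_sum]
  split_ifs with hj
  · obtain ⟨n, rfl⟩ := Nat.exists_eq_add_of_le' hj
    rw [sum_mul_cycleIndexTerm_add, Nat.add_sub_cancel, mul_assoc]
  · rw [sum_eq_zero fun l hl => by
      rw [eq_zero_of_mem_partitionMultiplicities hl (not_le.mp hj), Nat.cast_zero, zero_mul],
      mul_zero]

theorem mul_sum_range_prod_add_div_factorial [CharZero K] (x : K) (k : ℕ) :
    x * ∑ j ∈ range k, (∏ i ∈ range j, (x + i)) / j.factorial =
      k * ((∏ i ∈ range k, (x + i)) / k.factorial) := by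
  induction k with
  | zero => simp
  | succ k ih =>
    rw [sum_range_succ, mul_add, ih, prod_range_succ, Nat.factorial_succ]
    push_cast
    field_simp
    ring

theorem Fin.sum_univ_ite_add_one_le {M : Type*} [AddCommMonoid M] {n : ℕ} (hn : n ≤ m)
    (f : ℕ → M) : ∑ j : Fin m, (if j.1 + 1 ≤ n then f j else 0) = ∑ j ∈ range n, f j := by
  have hrange : (range m).filter (· + 1 ≤ n) = range n := by
    ext j; simp only [mem_filter, mem_range]; omega
  rw [Fin.sum_univ_eq_sum_range (fun j => if j + 1 ≤ n then f j else 0), ← sum_filter, hrange]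

theorem sum_cycleIndexTerm_div_eq [CharZero K] (x : K) {n : ℕ} (hn : n ≤ m) :
    ∑ l ∈ partitionMultiplicities m n, cycleIndexTerm (fun i => x / (i.1 + 1)) l =
      (∏ i ∈ range n, (x + i)) / n.factorial := by
  induction n using Nat.strong_induction_on with
  | _ n ih =>
  rcases n with _ | n
  · simp [partitionMultiplicities_zero, cycleIndexTerm]
  refine mul_left_cancel₀ (Nat.cast_add_one_ne_zero n) ?_
  have hweight : ∀ j : ℕ, ((j : K) + 1) * (x / (j + 1)) = x :=
    fun j => mul_div_cancel₀ _ (Nat.cast_add_one_ne_zero j)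
  calc ((n : K) + 1) * ∑ l ∈ partitionMultiplicities m (n + 1),
        cycleIndexTerm (fun i => x / (i.1 + 1)) l
      = ∑ j ∈ range (n + 1), x * ∑ l ∈ partitionMultiplicities m (n - j),
          cycleIndexTerm (fun i => x / (i.1 + 1)) l := by
        rw [← Nat.cast_add_one, natCast_mul_sum_cycleIndexTerm]
        simp only [Nat.add_sub_add_right, hweight]
        exact Fin.sum_univ_ite_add_one_le hn fun j => x * ∑ l ∈ partitionMultiplicities m (n - j),
          cycleIndexTerm (fun i => x / (i.1 + 1)) l
    _ = ∑ j ∈ range (n + 1), x * ((∏ i ∈ range (n - j), (x + i)) / (n - j).factorial) :=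
        sum_congr rfl fun j _ => by rw [ih _ (by omega) (by omega)]
    _ = ((n : K) + 1) * ((∏ i ∈ range (n + 1), (x + i)) / (n + 1).factorial) := by
        rw [← mul_sum, ← Nat.cast_add_one, ← mul_sum_range_prod_add_div_factorial]
        exact congrArg (x * ·)
          (sum_range_reflect (fun j => (∏ i ∈ range j, (x + i)) / j.factorial) (n + 1))

end CycleIndex

theorem bellTuples_eq_partitionMultiplicities (k : ℕ) :
    bellTuples k = partitionMultiplicities k k :=
  rfl

theorem stmt16_general (k : ℕ) (x : ℝ) :
    ∑ l ∈ bellTuples k,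
        x ^ (∑ i, l i) /
          ((∏ i : Fin k, (Nat.factorial (l i) : ℝ)) *
            ∏ i : Fin k, ((i.1 + 1 : ℕ) : ℝ) ^ (l i)) =
      (∏ i ∈ Finset.range k, (x + i)) / (Nat.factorial k : ℝ) := by
  simp_rw [bellTuples_eq_partitionMultiplicities, ← cycleIndexTerm_div_succ]
  exact sum_cycleIndexTerm_div_eq x le_rfl

/-- identity (3.33): the cycle-index polynomial of the symmetric group equals
the rising factorial divided by `k!`:
`∑ x^{l_1+⋯+l_k}/(l_1!⋯l_k! · 1^{l_1}⋯k^{l_k}) = x(x+1)⋯(x+k−1)/k!`. -/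
theorem stmt16 (k : ℕ) (hk : 1 ≤ k) (x : ℝ) :
    ∑ l ∈ bellTuples k,
        x ^ (∑ i, l i) /
          ((∏ i : Fin k, (Nat.factorial (l i) : ℝ)) *
            ∏ i : Fin k, ((i.1 + 1 : ℕ) : ℝ) ^ (l i)) =
      (∏ i ∈ Finset.range k, (x + i)) / (Nat.factorial k : ℝ) :=
  stmt16_general k x

end
end
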